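/- For every positive integer d and every τ ≥ 1, ∫_0^∞ (∫_τ^{max(x,τ)} |H_d(t)|/t dt) φ(x) dx ≤ e^{−τ²/4}, where φ(x) = e^{−x²/2}/√(2π) is the standard Gaussian density (the inner integral is 0 when x ≤ τ). -/

import Mathlib

open MeasureTheory ProbabilityTheory Real

/-- The `d`-th normalized Hermite polynomial (as a function on `ℝ`): the monic
probabilist's Hermite polynomial divided by `√(d!)`. -/
noncomputable def normHermite (d : ℕ) (x : ℝ) : ℝ :=
  Polynomial.aeval x (Polynomial.hermite d) / Real.sqrt (Nat.factorial d)

/-- The standard Gaussian density on `ℝ`. -/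
noncomputable def gaussDensity (x : ℝ) : ℝ := Real.exp (-x ^ 2 / 2) / Real.sqrt (2 * π)

open Polynomial Nat

/-!
Write `γ(t) = e^{-t²/2}` and `Heₙ = hermite n`. Since `Heₙ₊₁ γ = -(Heₙ γ)'`, integrating by
parts `n` times gives `∫ p Heₙ γ = ∫ p⁽ⁿ⁾ γ` for every polynomial `p`, hence `∫ He_d² γ = d! √(2π)`
and `∫ H_d² γ = √(2π)` for the normalized `H_d`. Splitting `|H_d(t)|/t = (|H_d(t)| e^{-t²/4}) · (e^{t²/4}/t)`,
Cauchy–Schwarz and `∫_τ^x e^{t²/2}/t² dt ≤ e^{x²/2}` (for `τ ≥ 1`) bound the inner integral by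
`(2π)^{1/4} e^{x²/4}`. Against `φ(x)` this leaves `(2π)^{-1/4} e^{-x²/4}` on `x > τ`, and
`∫_τ^∞ e^{-x²/4} dx ≤ e^{(1-τ²)/4}`; the theorem follows from `e ≤ 2π`.
-/

theorem integrable_pow_mul_exp_neg_sq_div_two (n : ℕ) :
    Integrable fun x : ℝ => x ^ n * exp (-(x ^ 2 / 2)) := by
  have h := integrable_rpow_mul_exp_neg_mul_sq (b := 1 / 2) (by norm_num) (s := n)
    (by linarith [n.cast_nonneg (α := ℝ)])
  simp_rw [rpow_natCast] at h
  refine h.congr (ae_of_all _ fun x => ?_)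
  ring_nf

theorem integrable_aeval_mul_exp_neg_sq_div_two {R : Type*} [CommSemiring R] [Algebra R ℝ]
    (p : R[X]) : Integrable fun x : ℝ => aeval x p * exp (-(x ^ 2 / 2)) := by
  simp_rw [aeval_eq_sum_range, Algebra.smul_def, Finset.sum_mul, mul_assoc]
  exact integrable_finsetSum _ fun i _ => (integrable_pow_mul_exp_neg_sq_div_two i).const_mul _

theorem hasDerivAt_exp_neg_sq_div_two (x : ℝ) :
    HasDerivAt (fun y : ℝ => exp (-(y ^ 2 / 2))) (-x * exp (-(x ^ 2 / 2))) x := by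
  have h : HasDerivAt (fun y : ℝ => -(y ^ 2 / 2)) (-x) x := by
    simpa using ((hasDerivAt_pow 2 x).div_const 2).fun_neg
  simpa [mul_comm] using h.exp

theorem hasDerivAt_aeval_hermite_mul_exp (n : ℕ) (x : ℝ) :
    HasDerivAt (fun y => aeval y (hermite n) * exp (-(y ^ 2 / 2)))
      (-(aeval x (hermite (n + 1)) * exp (-(x ^ 2 / 2)))) x := by
  refine (((hermite n).hasDerivAt_aeval x).mul (hasDerivAt_exp_neg_sq_div_two x)).congr_deriv ?_
  rw [hermite_succ, map_sub, map_mul, aeval_X]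
  ring

theorem integral_aeval_mul_hermite_mul_exp (p : ℤ[X]) (n : ℕ) :
    ∫ x : ℝ, aeval x p * aeval x (hermite n) * exp (-(x ^ 2 / 2)) =
      ∫ x : ℝ, aeval x (derivative^[n] p) * exp (-(x ^ 2 / 2)) := by
  induction n generalizing p with
  | zero => simp [hermite_zero]
  | succ n ih =>
    have hint (q : ℤ[X]) (k : ℕ) :
        Integrable fun x : ℝ => aeval x q * (aeval x (hermite k) * exp (-(x ^ 2 / 2))) := by
      simpa only [map_mul, mul_assoc] using integrable_aeval_mul_exp_neg_sq_div_two (q * hermite k)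
    have hibp := integral_mul_deriv_eq_deriv_mul_of_integrable
      (u := fun x : ℝ => aeval x p) (u' := fun x => aeval x (derivative p))
      (fun x _ => p.hasDerivAt_aeval x) (fun x _ => hasDerivAt_aeval_hermite_mul_exp n x)
      (by simpa only [Pi.mul_def, mul_neg] using (hint p (n + 1)).fun_neg) (hint _ n) (hint p n)
    simp only [mul_neg, integral_neg, neg_inj] at hibp
    simp only [mul_assoc, Function.iterate_succ_apply, ← ih]
    exact hibp

theorem iterate_derivative_hermite_self (n : ℕ) : derivative^[n] (hermite n) = C (n ! : ℤ) := by
  rw [eq_C_of_natDegree_eq_zero (p := derivative^[n] (hermite n))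
      (by simpa using natDegree_iterate_derivative (hermite n) n),
    coeff_iterate_derivative, zero_add, coeff_hermite_self, Nat.descFactorial_self]
  simp

theorem integral_exp_neg_sq_div_two : ∫ x : ℝ, exp (-(x ^ 2 / 2)) = √(2 * π) := by
  calc ∫ x : ℝ, exp (-(x ^ 2 / 2)) = ∫ x : ℝ, exp (-(1 / 2) * x ^ 2) := by
        congr with x; ring_nf
    _ = √(2 * π) := by rw [integral_gaussian, div_div_eq_mul_div, div_one, mul_comm]

theorem integral_aeval_hermite_sq_mul_exp (n : ℕ) :
    ∫ x : ℝ, aeval x (hermite n) ^ 2 * exp (-(x ^ 2 / 2)) = n ! * √(2 * π) := by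
  calc ∫ x : ℝ, aeval x (hermite n) ^ 2 * exp (-(x ^ 2 / 2))
      = ∫ x : ℝ, aeval x (hermite n) * aeval x (hermite n) * exp (-(x ^ 2 / 2)) := by
        simp only [pow_two (aeval _ _)]
    _ = n ! * √(2 * π) := by
        rw [integral_aeval_mul_hermite_mul_exp, iterate_derivative_hermite_self]
        simp only [map_natCast, integral_const_mul, integral_exp_neg_sq_div_two]

theorem normHermite_sq (d : ℕ) (x : ℝ) :
    normHermite d x ^ 2 = (d ! : ℝ)⁻¹ * aeval x (hermite d) ^ 2 := by
  rw [normHermite, div_pow, sq_sqrt (by positivity), inv_mul_eq_div]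

theorem integrable_normHermite_sq_mul_exp (d : ℕ) :
    Integrable fun x : ℝ => normHermite d x ^ 2 * exp (-(x ^ 2 / 2)) := by
  simp only [normHermite_sq, mul_assoc]
  refine Integrable.const_mul ?_ _
  simpa only [map_mul, pow_two] using
    integrable_aeval_mul_exp_neg_sq_div_two (hermite d * hermite d)

theorem integral_normHermite_sq_mul_exp (d : ℕ) :
    ∫ x : ℝ, normHermite d x ^ 2 * exp (-(x ^ 2 / 2)) = √(2 * π) := by
  simp only [normHermite_sq, mul_assoc, integral_const_mul, integral_aeval_hermite_sq_mul_exp]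
  field_simp

theorem two_mul_mul_le_mul_sq_add_sq_div {a b c : ℝ} (hc : 0 < c) :
    2 * (a * b) ≤ c * a ^ 2 + b ^ 2 / c := by
  have h : c * a ^ 2 + b ^ 2 / c - 2 * (a * b) = (c * a - b) ^ 2 / c := by
    field_simp; ring
  linarith [div_nonneg (sq_nonneg (c * a - b)) hc.le]

theorem integral_mul_le_sqrt_mul_of_integral_sq_le {α : Type*} [MeasurableSpace α]
    {μ : Measure α} {f g : α → ℝ} {A B : ℝ} (hf : Integrable (fun x => f x ^ 2) μ)
    (hg : Integrable (fun x => g x ^ 2) μ) (hA : 0 < A) (hB : 0 < B)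
    (hfA : ∫ x, f x ^ 2 ∂μ ≤ A) (hgB : ∫ x, g x ^ 2 ∂μ ≤ B) :
    ∫ x, f x * g x ∂μ ≤ √(A * B) := by
  by_cases hfg : Integrable (fun x => f x * g x) μ
  swap
  · rw [integral_undef hfg]; positivity
  -- AM-GM with the weight `c` that balances the two bounds
  set c := √B / √A with hc
  have hc0 : 0 < c := by positivity
  have key : ∫ x, f x * g x ∂μ ≤ ∫ x, (c * f x ^ 2 + g x ^ 2 / c) / 2 ∂μ :=
    integral_mono hfg (((hf.const_mul c).add (hg.div_const c)).div_const 2) fun x => by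
      have := two_mul_mul_le_mul_sq_add_sq_div (a := f x) (b := g x) hc0
      linarith
  rw [integral_div, integral_add (hf.const_mul c) (hg.div_const c), integral_const_mul,
    integral_div] at key
  calc ∫ x, f x * g x ∂μ ≤ (c * A + B / c) / 2 := key.trans (by gcongr)
    _ = √(A * B) := by
      rw [hc, sqrt_mul hA.le]
      field_simp
      rw [sq_sqrt hA.le, sq_sqrt hB.le]; ring

theorem continuousOn_exp_sq_div_two_div_sq :
    ContinuousOn (fun t : ℝ => exp (t ^ 2 / 2) / t ^ 2) (Set.Ioi 0) := fun t ht =>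
  have : t ≠ 0 := (Set.mem_Ioi.1 ht).ne'
  (by fun_prop (disch := simp [this]) :
    ContinuousAt (fun t : ℝ => exp (t ^ 2 / 2) / t ^ 2) t).continuousWithinAt

theorem integral_exp_sq_div_two_div_sq_le {a b : ℝ} (ha : 1 ≤ a) (hab : a ≤ b) :
    ∫ t in a..b, exp (t ^ 2 / 2) / t ^ 2 ≤ exp (b ^ 2 / 2) := by
  have hderiv (t : ℝ) : HasDerivAt (fun y => exp (y ^ 2 / 2)) (t * exp (t ^ 2 / 2)) t := by
    simpa [mul_comm] using ((hasDerivAt_pow 2 t).div_const 2).exp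
  have hcont : Continuous fun t : ℝ => t * exp (t ^ 2 / 2) := by fun_prop
  calc ∫ t in a..b, exp (t ^ 2 / 2) / t ^ 2
      ≤ ∫ t in a..b, t * exp (t ^ 2 / 2) := by
        refine intervalIntegral.integral_mono_on hab ?_ (hcont.intervalIntegrable a b)
          fun t ht => ?_
        · exact (continuousOn_exp_sq_div_two_div_sq.mono fun t ht =>
            (zero_lt_one.trans_le ha).trans_le ht.1).intervalIntegrable_of_Icc hab
        · have ht1 : 1 ≤ t := ha.trans ht.1
          rw [div_le_iff₀ (by positivity)]
          nlinarith [exp_pos (t ^ 2 / 2), one_le_pow₀ (n := 3) ht1]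
    _ = exp (b ^ 2 / 2) - exp (a ^ 2 / 2) :=
        intervalIntegral.integral_eq_sub_of_hasDerivAt (fun t _ => hderiv t)
          (hcont.intervalIntegrable a b)
    _ ≤ exp (b ^ 2 / 2) := by linarith [exp_pos (a ^ 2 / 2)]

theorem integral_abs_normHermite_div_le (d : ℕ) {a b : ℝ} (ha : 1 ≤ a) (hab : a ≤ b) :
    ∫ t in a..b, |normHermite d t| / t ≤ √(√(2 * π)) * exp (b ^ 2 / 4) := by
  set f := fun t : ℝ => |normHermite d t| * exp (-(t ^ 2 / 4))
  set g := fun t : ℝ => exp (t ^ 2 / 4) / t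
  have hf : (fun t => f t ^ 2) = fun t => normHermite d t ^ 2 * exp (-(t ^ 2 / 2)) := by
    ext t; simp only [f, mul_pow, sq_abs, ← exp_nat_mul]; ring_nf
  have hg : (fun t => g t ^ 2) = fun t => exp (t ^ 2 / 2) / t ^ 2 := by
    ext t; simp only [g, div_pow, ← exp_nat_mul]; ring_nf
  have hfg : ∀ t ∈ Set.Ioc a b, |normHermite d t| / t = f t * g t := fun t _ => by
    simp only [f, g, mul_div_assoc', mul_assoc, ← exp_add, neg_add_cancel, exp_zero, mul_one]
  have hgint : IntegrableOn (fun t => g t ^ 2) (Set.Ioc a b) := by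
    rw [hg]
    exact (continuousOn_exp_sq_div_two_div_sq.mono fun t ht =>
      (zero_lt_one.trans_le ha).trans_le ht.1).integrableOn_Icc.mono_set Set.Ioc_subset_Icc_self
  have hfint : IntegrableOn (fun t => f t ^ 2) (Set.Ioc a b) :=
    hf ▸ (integrable_normHermite_sq_mul_exp d).integrableOn
  calc ∫ t in a..b, |normHermite d t| / t = ∫ t in Set.Ioc a b, f t * g t := by
        rw [intervalIntegral.integral_of_le hab, setIntegral_congr_fun measurableSet_Ioc hfg]
    _ ≤ √(√(2 * π) * exp (b ^ 2 / 2)) := by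
        refine integral_mul_le_sqrt_mul_of_integral_sq_le hfint hgint (by positivity) (exp_pos _)
          ?_ ?_
        · rw [hf, ← integral_normHermite_sq_mul_exp d]
          exact setIntegral_le_integral (integrable_normHermite_sq_mul_exp d)
            (ae_of_all _ fun t => by positivity)
        · rw [hg, ← intervalIntegral.integral_of_le hab]
          exact integral_exp_sq_div_two_div_sq_le ha hab
    _ = √(√(2 * π)) * exp (b ^ 2 / 4) := by
        rw [sqrt_mul (by positivity), ← exp_half]; ring_nf

theorem integral_Ioi_exp_neg_sq_div_four_le {a : ℝ} (ha : 1 ≤ a) :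
    ∫ x in Set.Ioi a, exp (-x ^ 2 / 4) ≤ exp ((1 - a ^ 2) / 4) := by
  -- `-x²/4 ≤ (1 - a²)/4 + a - x` on `[a, ∞)`, and the right side integrates to `(1 - a²)/4`
  have hdom : IntegrableOn (fun x => exp ((1 - a ^ 2) / 4 + a) * exp (-x)) (Set.Ioi a) :=
    (integrableOn_exp_neg_Ioi a).const_mul _
  calc ∫ x in Set.Ioi a, exp (-x ^ 2 / 4)
      ≤ ∫ x in Set.Ioi a, exp ((1 - a ^ 2) / 4 + a) * exp (-x) := by
        refine integral_mono_of_nonneg (ae_of_all _ fun x => (exp_pos _).le) hdom ?_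
        refine (ae_restrict_iff' measurableSet_Ioi).2 (ae_of_all _ fun x (hx : a < x) => ?_)
        dsimp only
        rw [← exp_add, exp_le_exp]
        nlinarith [sq_nonneg (x - a - 1), mul_nonneg (sub_nonneg.2 ha) (sub_nonneg.2 hx.le)]
    _ = exp ((1 - a ^ 2) / 4) := by
        rw [integral_const_mul, integral_exp_neg_Ioi, ← exp_add]; ring_nf

theorem exp_one_div_four_le_sqrt_sqrt_two_pi : exp (1 / 4) ≤ √(√(2 * π)) := by
  have h : exp (1 / 4) = √(√(exp 1)) := by rw [← exp_half, ← exp_half]; norm_num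
  rw [h]
  gcongr
  linarith [exp_one_lt_d9, pi_gt_three]

theorem gaussDensity_nonneg (x : ℝ) : 0 ≤ gaussDensity x := by
  unfold gaussDensity; positivity

theorem integrable_exp_neg_sq_div_four : Integrable fun x : ℝ => exp (-x ^ 2 / 4) :=
  (integrable_exp_neg_mul_sq (b := 1 / 4) (by norm_num)).congr (ae_of_all _ fun x => by ring_nf)

theorem integral_abs_normHermite_div_mul_gaussDensity_le (d : ℕ) {τ : ℝ} (hτ : 1 ≤ τ) (x : ℝ) :
    (∫ t in τ..max x τ, |normHermite d t| / t) * gaussDensity x ≤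
      (Set.Ioi τ).indicator (fun x => exp (-x ^ 2 / 4) / √(√(2 * π))) x := by
  rcases le_or_gt x τ with hx | hx
  · rw [max_eq_right hx, intervalIntegral.integral_same, zero_mul,
      Set.indicator_of_notMem (show x ∉ Set.Ioi τ from not_lt.2 hx)]
  rw [max_eq_left hx.le, Set.indicator_of_mem (show x ∈ Set.Ioi τ from hx)]
  set s := √(√(2 * π)) with hs_def
  have hs : √(2 * π) = s ^ 2 := by rw [hs_def, sq_sqrt (sqrt_nonneg _)]
  calc (∫ t in τ..x, |normHermite d t| / t) * gaussDensity x
      ≤ s * exp (x ^ 2 / 4) * gaussDensity x :=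
        mul_le_mul_of_nonneg_right (integral_abs_normHermite_div_le d hτ hx.le)
          (gaussDensity_nonneg x)
    _ = exp (-x ^ 2 / 4) / s := by
        rw [gaussDensity, hs, show -x ^ 2 / 4 = x ^ 2 / 4 + -x ^ 2 / 2 by ring, exp_add]
        field_simp

theorem stmt_14_general (d : ℕ) (τ : ℝ) (hτ : 1 ≤ τ) :
    ∫ x in Set.Ioi (0 : ℝ),
        (∫ t in τ..(max x τ), |normHermite d t| / t) * gaussDensity x
      ≤ Real.exp (-τ ^ 2 / 4) := by
  have hnonneg (x : ℝ) : 0 ≤ (∫ t in τ..max x τ, |normHermite d t| / t) * gaussDensity x := by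
    refine mul_nonneg (intervalIntegral.integral_nonneg (le_max_right x τ) fun t ht => ?_)
      (gaussDensity_nonneg x)
    have : 0 < t := by linarith [ht.1]
    positivity
  have hint := (integrable_exp_neg_sq_div_four.div_const (√(√(2 * π)))).indicator
    (measurableSet_Ioi (a := τ))
  calc ∫ x in Set.Ioi (0 : ℝ), (∫ t in τ..max x τ, |normHermite d t| / t) * gaussDensity x
      ≤ ∫ x in Set.Ioi (0 : ℝ),
          (Set.Ioi τ).indicator (fun x => exp (-x ^ 2 / 4) / √(√(2 * π))) x :=
        integral_mono_of_nonneg (ae_of_all _ hnonneg) hint.integrableOn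
          (ae_of_all _ (integral_abs_normHermite_div_mul_gaussDensity_le d hτ))
    _ = (∫ x in Set.Ioi τ, exp (-x ^ 2 / 4)) / √(√(2 * π)) := by
        rw [setIntegral_indicator measurableSet_Ioi, Set.Ioi_inter_Ioi, max_eq_right (by linarith),
          integral_div]
    _ ≤ exp ((1 - τ ^ 2) / 4) / √(√(2 * π)) := by
        gcongr; exact integral_Ioi_exp_neg_sq_div_four_le hτ
    _ ≤ exp (-τ ^ 2 / 4) := by
        rw [div_le_iff₀ (by positivity), show (1 - τ ^ 2) / 4 = 1 / 4 + -τ ^ 2 / 4 by ring,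
          exp_add, mul_comm]
        exact mul_le_mul_of_nonneg_left exp_one_div_four_le_sqrt_sqrt_two_pi (exp_pos _).le

theorem stmt_14 (d : ℕ) (hd : 0 < d) (τ : ℝ) (hτ : 1 ≤ τ) :
    ∫ x in Set.Ioi (0 : ℝ),
        (∫ t in τ..(max x τ), |normHermite d t| / t) * gaussDensity x
      ≤ Real.exp (-τ ^ 2 / 4) :=
  stmt_14_general d τ hτ
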